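/- arXiv:2409.00386 — 2 statements merged into one kernel-verified Lean document; each statement's English description precedes it below -/
import Mathlib

section
/- Let a > 0 and let u : [0,a] → ℝ be continuously differentiable with u(0) = 0. Then for every r ∈ [0,a], u(r)² ≤ ∫₀ᵃ (u'(s) + u(s)/s)² s ds. In particular, sup_{r∈[0,a]} |u(r)|² is bounded by the squared L² norm (with weight s) of the radial divergence u' + u/s. -/
open MeasureTheory Set

/-! Since `u 0 = 0`, `u r ^ 2 = ∫₀ʳ 2 u u'`. For `s > 0` the integrand of the right-hand side
expands as `(u' + u / s) ^ 2 * s = u' ^ 2 * s + 2 u u' + u ^ 2 / s ≥ 2 u u'`, so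
`u r ^ 2 ≤ ∫₀ʳ (u' + u / s) ^ 2 * s`, and extending the range of a nonnegative integrand from
`[0, r]` to `[0, a]` only increases the integral. -/

lemma two_mul_mul_le_sq_add_div_mul {s : ℝ} (hs : 0 < s) (x y : ℝ) :
    2 * (x * y) ≤ (y + x / s) ^ 2 * s := by
  have hexpand : (y + x / s) ^ 2 * s = y ^ 2 * s + 2 * (x * y) + x ^ 2 / s := by
    field_simp
    ring
  have hsq : 0 ≤ y ^ 2 * s + x ^ 2 / s := by positivity
  linarith

lemma integral_two_mul_mul_deriv {u u' : ℝ → ℝ} {a b : ℝ}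
    (hderiv : ∀ s ∈ uIcc a b, HasDerivAt u (u' s) s) (hcont : ContinuousOn u' (uIcc a b)) :
    ∫ s in a..b, 2 * (u s * u' s) = u b ^ 2 - u a ^ 2 := by
  refine intervalIntegral.integral_eq_sub_of_hasDerivAt (f := fun s => u s ^ 2) (fun s hs => ?_)
    (continuousOn_const.mul ((HasDerivAt.continuousOn hderiv).mul hcont)).intervalIntegrable
  exact ((hderiv s hs).fun_pow 2).congr_deriv (by ring)

lemma sq_le_integral_sq_add_div_mul {u u' : ℝ → ℝ} {r : ℝ} (hr : 0 ≤ r)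
    (hderiv : ∀ s ∈ Icc 0 r, HasDerivAt u (u' s) s) (hcont : ContinuousOn u' (Icc 0 r))
    (hu0 : u 0 = 0)
    (hint : IntervalIntegrable (fun s => (u' s + u s / s) ^ 2 * s) volume 0 r) :
    u r ^ 2 ≤ ∫ s in (0:ℝ)..r, (u' s + u s / s) ^ 2 * s := by
  rw [← uIcc_of_le hr] at hderiv hcont
  have hftc := integral_two_mul_mul_deriv hderiv hcont
  rw [hu0, zero_pow two_ne_zero, sub_zero] at hftc
  rw [← hftc]
  refine intervalIntegral.integral_mono_on hr
    (continuousOn_const.mul ((HasDerivAt.continuousOn hderiv).mul hcont)).intervalIntegrable hint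
    fun s hs => ?_
  rcases hs.1.eq_or_lt with rfl | hs0
  · simp [hu0]
  · exact two_mul_mul_le_sq_add_div_mul hs0 _ _

theorem stmt0_general (a : ℝ) (u u' : ℝ → ℝ)
    (hderiv : ∀ s ∈ Icc (0:ℝ) a, HasDerivAt u (u' s) s)
    (hcont : ContinuousOn u' (Icc (0:ℝ) a))
    (hu0 : u 0 = 0)
    (hint : IntervalIntegrable (fun s => (u' s + u s / s)^2 * s) volume 0 a) :
    ∀ r ∈ Icc (0:ℝ) a, (u r)^2 ≤ ∫ s in (0:ℝ)..a, (u' s + u s / s)^2 * s := by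
  rintro r ⟨hr0, hra⟩
  have hsub : Icc (0:ℝ) r ⊆ Icc 0 a := Icc_subset_Icc le_rfl hra
  have hint_r : IntervalIntegrable (fun s => (u' s + u s / s) ^ 2 * s) volume 0 r :=
    hint.mono_set (by rwa [uIcc_of_le hr0, uIcc_of_le (hr0.trans hra)])
  have hnonneg : 0 ≤ᵐ[volume.restrict (Ioc 0 a)] fun s => (u' s + u s / s) ^ 2 * s :=
    (ae_restrict_iff' measurableSet_Ioc).2 (Filter.Eventually.of_forall fun s hs => by
      have := hs.1.le
      positivity)
  calc u r ^ 2 ≤ ∫ s in (0:ℝ)..r, (u' s + u s / s) ^ 2 * s :=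
        sq_le_integral_sq_add_div_mul hr0 (fun s hs => hderiv s (hsub hs)) (hcont.mono hsub) hu0
          hint_r
    _ ≤ ∫ s in (0:ℝ)..a, (u' s + u s / s) ^ 2 * s :=
        intervalIntegral.integral_mono_interval le_rfl hr0 hra hnonneg hint

theorem stmt0 (a : ℝ) (ha : 0 < a) (u u' : ℝ → ℝ)
    (hderiv : ∀ s ∈ Icc (0:ℝ) a, HasDerivAt u (u' s) s)
    (hcont : ContinuousOn u' (Icc (0:ℝ) a))
    (hu0 : u 0 = 0)
    (hint : IntervalIntegrable (fun s => (u' s + u s / s)^2 * s) volume 0 a) :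
    ∀ r ∈ Icc (0:ℝ) a, (u r)^2 ≤ ∫ s in (0:ℝ)..a, (u' s + u s / s)^2 * s :=
  stmt0_general a u u' hderiv hcont hu0 hint
end

section
/- Let α ≥ 0 and A : [0,∞) → (0,∞) continuous. Suppose there is a constant C > 0 such that A(t)^{-α} ≤ C (1+t)^{-2} (1+t + ∫₀ᵗ A(s) ds) for all t ≥ 0. Then the running maximum A_M(t) := sup_{s∈[0,t]} A(s) satisfies A_M(t) ≥ c (1+t)^{1/(1+α)} for all t ≥ 0, for some constant c > 0 depending on C and α. -/
/-! Write `M = A_M(t)`. Bounding the integral by `t M` and `A(t)^{-α}` from below by `M^{-α}`, the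
hypothesis gives `M^{-α} ≤ C (1 + M) / (1 + t)`, i.e. `1 + t ≤ C (1 + M) M^α ≤ C (1 + M)^{1+α}`.
Taking `1/(1+α)`-th powers and using `1 + M ≤ (1 / A(0) + 1) M` (as `A(0) ≤ M`) gives the bound
with `c = (C^{1/(1+α)} (1 / A(0) + 1))⁻¹`. -/

open MeasureTheory Set

lemma intervalIntegral_le_mul_sSup_image_Icc {f : ℝ → ℝ} {a b : ℝ} (hab : a ≤ b)
    (hf : ContinuousOn f (Icc a b)) :
    ∫ s in a..b, f s ≤ (b - a) * sSup (f '' Icc a b) := by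
  have hbdd : BddAbove (f '' Icc a b) := (isCompact_Icc.image_of_continuousOn hf).bddAbove
  simpa using intervalIntegral.integral_mono_on hab (hf.intervalIntegrable_of_Icc hab)
    (intervalIntegrable_const (μ := volume)) fun s hs => le_csSup hbdd (mem_image_of_mem f hs)

lemma le_mul_one_add_rpow_of_rpow_neg_le {α C M τ : ℝ} (hα : 0 ≤ α) (hM : 0 < M) (hτ : 0 < τ)
    (h : M ^ (-α) ≤ C * (1 + M) / τ) : τ ≤ C * (1 + M) ^ (1 + α) := by
  have hMα : 0 < M ^ α := Real.rpow_pos_of_pos hM α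
  rw [Real.rpow_neg hM.le, le_div_iff₀ hτ, inv_mul_le_iff₀ hMα] at h
  have hC : 0 ≤ C * (1 + M) := by
    by_contra! hneg
    nlinarith [mul_pos hMα hτ]
  calc τ ≤ M ^ α * (C * (1 + M)) := h
    _ ≤ (1 + M) ^ α * (C * (1 + M)) := by gcongr; linarith
    _ = C * (1 + M) ^ (1 + α) := by
      rw [Real.rpow_add (by linarith), Real.rpow_one]; ring

lemma rpow_one_div_le_of_le_mul_rpow {p C x τ : ℝ} (hp : 0 < p) (hC : 0 ≤ C) (hx : 0 ≤ x)
    (hτ : 0 ≤ τ) (h : τ ≤ C * x ^ p) : τ ^ (1 / p) ≤ C ^ (1 / p) * x := by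
  calc τ ^ (1 / p) ≤ (C * x ^ p) ^ (1 / p) := by gcongr
    _ = C ^ (1 / p) * x := by
      rw [Real.mul_rpow hC (by positivity), ← Real.rpow_mul hx, mul_one_div_cancel hp.ne',
        Real.rpow_one]

theorem stmt5 (α : ℝ) (hα : 0 ≤ α) (A : ℝ → ℝ) (hA : Continuous A)
    (hApos : ∀ t, 0 < A t) (C : ℝ) (hC : 0 < C)
    (h : ∀ t ≥ (0:ℝ),
      (A t) ^ (-α) ≤ C * (1 + t) ^ (-(2:ℝ)) * (1 + t + ∫ s in (0:ℝ)..t, A s)) :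
    ∃ c > 0, ∀ t ≥ (0:ℝ), c * (1 + t) ^ (1 / (1 + α)) ≤ sSup (A '' Icc 0 t) := by
  have hA0 := hApos 0
  refine ⟨(C ^ (1 / (1 + α)) * (1 / A 0 + 1))⁻¹, by positivity, fun t ht => ?_⟩
  set M := sSup (A '' Icc 0 t)
  have hbdd : BddAbove (A '' Icc 0 t) := (isCompact_Icc.image hA).bddAbove
  have hA0M : A 0 ≤ M := le_csSup hbdd (mem_image_of_mem A (left_mem_Icc.mpr ht))
  have hAtM : A t ≤ M := le_csSup hbdd (mem_image_of_mem A (right_mem_Icc.mpr ht))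
  have hM : 0 < M := hA0.trans_le hA0M
  have h1t : 0 < 1 + t := by linarith
  have hint : ∫ s in (0:ℝ)..t, A s ≤ t * M := by
    simpa using intervalIntegral_le_mul_sSup_image_Icc ht hA.continuousOn
  have hdecay : M ^ (-α) ≤ C * (1 + M) / (1 + t) := calc
    M ^ (-α) ≤ A t ^ (-α) := Real.rpow_le_rpow_of_nonpos (hApos t) hAtM (by linarith)
    _ ≤ C * (1 + t) ^ (-(2:ℝ)) * (1 + t + ∫ s in (0:ℝ)..t, A s) := h t ht
    _ ≤ C * (1 + t) ^ (-(2:ℝ)) * ((1 + t) * (1 + M)) := by gcongr; nlinarith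
    _ = C * (1 + M) / (1 + t) := by
      rw [Real.rpow_neg h1t.le, Real.rpow_two]; field_simp
  have hroot := rpow_one_div_le_of_le_mul_rpow (by linarith) hC.le (by linarith) h1t.le
    (le_mul_one_add_rpow_of_rpow_neg_le hα hM h1t hdecay)
  rw [inv_mul_le_iff₀ (by positivity)]
  calc (1 + t) ^ (1 / (1 + α)) ≤ C ^ (1 / (1 + α)) * (1 + M) := hroot
    _ ≤ C ^ (1 / (1 + α)) * ((1 / A 0 + 1) * M) := by
      gcongr
      rw [add_mul, one_mul, one_div_mul_eq_div]
      gcongr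
      exact (one_le_div hA0).mpr hA0M
    _ = C ^ (1 / (1 + α)) * (1 / A 0 + 1) * M := by ring
end
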